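/- Let λ = z + 1/z with z ∈ D, δ ≤ |z| < 1 for some fixed 0 < δ < 1. Then |1±z|² ≍ |λ±2| and 1−|z| ≍ dist(λ,[−2,2])/|λ²−4|^{1/2}, with implied constants depending only on δ. -/

import Mathlib

/-!
Every point of `[-2, 2]` is `ζ + ζ⁻¹` for some `ζ` on the unit circle, and
`z + 1/z - (ζ + ζ⁻¹) = (z - ζ)(z - ζ⁻¹)/z`. Hence `‖z‖ · dist(λ, [-2,2])` is the infimum of
`‖z - ζ‖ ‖z - ζ⁻¹‖` over unit `ζ`; both factors are at least `1 - ‖z‖`, and this infimum is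
comparable to `(1 - ‖z‖) ‖1 - z²‖` (attained up to a factor 2 at `ζ = z/‖z‖`). Since
`√‖λ² - 4‖ = ‖1 - z²‖/‖z‖`, this is the third comparison; the first two are the identities
`‖z‖ ‖λ ± 2‖ = ‖1 ± z‖²`.
-/

open Complex Metric

/-- The segment `[−2,2]` viewed as a subset of `ℂ`. -/
def segTwo : Set ℂ := (fun x : ℝ => (x : ℂ)) '' Set.Icc (-2 : ℝ) 2

lemma segTwo_eq_image_sphere : segTwo = (fun ζ : ℂ => ζ + ζ⁻¹) '' sphere 0 1 := by
  ext w
  constructor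
  · rintro ⟨t, ⟨ht₁, ht₂⟩, rfl⟩
    refine ⟨exp (Real.arccos (t / 2) * I), by simp, ?_⟩
    dsimp only
    rw [← exp_neg, ← neg_mul, ← two_cos, ← ofReal_cos, Real.cos_arccos (by linarith) (by linarith)]
    push_cast
    ring
  · rintro ⟨ζ, hζ, rfl⟩
    have hζ1 : ‖ζ‖ = 1 := by simpa using hζ
    have hre := abs_le.1 ((abs_re_le_norm ζ).trans hζ1.le)
    refine ⟨2 * ζ.re, ⟨by linarith, by linarith⟩, ?_⟩
    dsimp only
    rw [inv_def, normSq_eq_norm_sq, hζ1, one_pow, inv_one, ofReal_one, mul_one, add_conj]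

lemma joukowski_sub_joukowski {z w : ℂ} (hz : z ≠ 0) (hw : w ≠ 0) :
    z + 1 / z - (w + w⁻¹) = (z - w) * (z - w⁻¹) / z := by
  field_simp
  ring

lemma one_sub_norm_mul_norm_one_sub_sq_le {z ζ : ℂ} (hz : ‖z‖ ≤ 1) (hζ : ‖ζ‖ = 1) :
    (1 - ‖z‖) * ‖1 - z ^ 2‖ ≤ 3 * (‖z - ζ‖ * ‖z - ζ⁻¹‖) := by
  have hζ0 : ζ ≠ 0 := norm_ne_zero_iff.1 (by rw [hζ]; norm_num)
  have hζinv : ‖ζ⁻¹‖ = 1 := by rw [norm_inv, hζ, inv_one]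
  have hu : 1 - ‖z‖ ≤ ‖z - ζ‖ := by
    simpa [hζ, norm_sub_rev] using norm_sub_norm_le ζ z
  have hv : 1 - ‖z‖ ≤ ‖z - ζ⁻¹‖ := by
    simpa [hζinv, norm_sub_rev] using norm_sub_norm_le ζ⁻¹ z
  have hdecomp : 1 - z ^ 2 = ζ * (ζ⁻¹ - z) + ζ⁻¹ * (ζ - z) - (z - ζ) * (z - ζ⁻¹) := by
    field_simp
    ring
  have htri : ‖1 - z ^ 2‖ ≤ ‖z - ζ⁻¹‖ + ‖z - ζ‖ + ‖z - ζ‖ * ‖z - ζ⁻¹‖ := by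
    rw [hdecomp]
    refine (norm_sub_le _ _).trans ?_
    rw [norm_mul (z - ζ)]
    gcongr
    refine (norm_add_le _ _).trans ?_
    rw [norm_mul, norm_mul, hζ, hζinv, norm_sub_rev ζ⁻¹, norm_sub_rev ζ, one_mul, one_mul]
  calc (1 - ‖z‖) * ‖1 - z ^ 2‖
      ≤ (1 - ‖z‖) * (‖z - ζ⁻¹‖ + ‖z - ζ‖ + ‖z - ζ‖ * ‖z - ζ⁻¹‖) := by gcongr
    _ = (1 - ‖z‖) * ‖z - ζ⁻¹‖ + (1 - ‖z‖) * ‖z - ζ‖ + (1 - ‖z‖) * (‖z - ζ‖ * ‖z - ζ⁻¹‖) := by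
        ring
    _ ≤ ‖z - ζ‖ * ‖z - ζ⁻¹‖ + ‖z - ζ⁻¹‖ * ‖z - ζ‖ + 1 * (‖z - ζ‖ * ‖z - ζ⁻¹‖) := by
        gcongr
        linarith [norm_nonneg z]
    _ = 3 * (‖z - ζ‖ * ‖z - ζ⁻¹‖) := by ring

lemma one_sub_norm_le_norm_one_sub_sq {z : ℂ} (hz : ‖z‖ ≤ 1) : 1 - ‖z‖ ≤ ‖1 - z ^ 2‖ := by
  have := norm_sub_norm_le 1 (z ^ 2)
  rw [norm_one, norm_pow] at this
  nlinarith [norm_nonneg z]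

lemma norm_sq_sub_norm_le {z : ℂ} (hz : ‖z‖ ≤ 1) :
    ‖z ^ 2 - ‖z‖‖ ≤ 2 * ‖z‖ * ‖1 - z ^ 2‖ := by
  have hr0 : 0 ≤ ‖z‖ := norm_nonneg z
  have hgap := one_sub_norm_le_norm_one_sub_sq hz
  calc ‖z ^ 2 - ‖z‖‖ = ‖(‖z‖ : ℂ) * -(1 - z ^ 2) + (1 - ‖z‖ : ℝ) * z ^ 2‖ := by
        push_cast; ring_nf
    _ ≤ ‖z‖ * ‖1 - z ^ 2‖ + (1 - ‖z‖) * ‖z‖ ^ 2 := by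
        refine (norm_add_le _ _).trans_eq ?_
        rw [norm_mul, norm_mul, norm_neg, norm_pow, norm_real, norm_real, Real.norm_of_nonneg hr0,
          Real.norm_of_nonneg (by linarith)]
    _ ≤ 2 * ‖z‖ * ‖1 - z ^ 2‖ := by
        have h1r : 0 ≤ 1 - ‖z‖ := by linarith
        nlinarith [mul_le_mul_of_nonneg_left hgap hr0, mul_nonneg (mul_nonneg hr0 h1r) h1r]

lemma norm_mul_infDist_joukowski_segTwo_le {z : ℂ} (hz0 : z ≠ 0) (hz1 : ‖z‖ ≤ 1) :
    ‖z‖ * infDist (z + 1 / z) segTwo ≤ 2 * ((1 - ‖z‖) * ‖1 - z ^ 2‖) := by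
  have hr0 : 0 < ‖z‖ := norm_pos_iff.2 hz0
  have hr0' : (‖z‖ : ℂ) ≠ 0 := ofReal_ne_zero.2 hr0.ne'
  set ζ : ℂ := z / ‖z‖ with hζdef
  have hζ : ‖ζ‖ = 1 := by rw [norm_div, norm_real, Real.norm_of_nonneg hr0.le, div_self hr0.ne']
  have hζ0 : ζ ≠ 0 := norm_ne_zero_iff.1 (by rw [hζ]; norm_num)
  have hmem : ζ + ζ⁻¹ ∈ segTwo := by
    rw [segTwo_eq_image_sphere]
    exact ⟨ζ, by simpa using hζ, rfl⟩
  have hu : ‖z - ζ‖ = 1 - ‖z‖ := by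
    have : z - ζ = ζ * ((‖z‖ - 1 : ℝ) : ℂ) := by
      rw [hζdef]
      field_simp
      push_cast
      ring
    rw [this, norm_mul, hζ, one_mul, norm_real, Real.norm_eq_abs, abs_sub_comm,
      abs_of_nonneg (by linarith)]
  have hv : ‖z - ζ⁻¹‖ ≤ 2 * ‖1 - z ^ 2‖ := by
    have : z * (z - ζ⁻¹) = z ^ 2 - ‖z‖ := by
      rw [hζdef, inv_div]
      field_simp
    refine le_of_mul_le_mul_left ?_ hr0
    rw [← norm_mul, this, ← mul_assoc, mul_comm (‖z‖) 2]
    exact norm_sq_sub_norm_le hz1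
  calc ‖z‖ * infDist (z + 1 / z) segTwo ≤ ‖z‖ * ‖z + 1 / z - (ζ + ζ⁻¹)‖ := by
        gcongr
        exact (infDist_le_dist_of_mem hmem).trans_eq (dist_eq_norm _ _)
    _ = ‖z - ζ‖ * ‖z - ζ⁻¹‖ := by
        rw [joukowski_sub_joukowski hz0 hζ0, norm_div, norm_mul]
        field_simp
    _ ≤ 2 * ((1 - ‖z‖) * ‖1 - z ^ 2‖) := by
        rw [hu, mul_left_comm]
        exact mul_le_mul_of_nonneg_left hv (by linarith)

lemma one_sub_norm_mul_norm_one_sub_sq_le_infDist {z : ℂ} (hz0 : z ≠ 0) (hz1 : ‖z‖ ≤ 1) :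
    (1 - ‖z‖) * ‖1 - z ^ 2‖ ≤ 3 * (‖z‖ * infDist (z + 1 / z) segTwo) := by
  have hr0 : 0 < ‖z‖ := norm_pos_iff.2 hz0
  have hne : segTwo.Nonempty := ⟨0, ⟨0, by norm_num, by simp⟩⟩
  suffices h : (1 - ‖z‖) * ‖1 - z ^ 2‖ / (3 * ‖z‖) ≤ infDist (z + 1 / z) segTwo by
    rwa [div_le_iff₀' (by positivity), mul_assoc] at h
  refine (le_infDist hne).2 ?_
  rw [segTwo_eq_image_sphere]
  rintro _ ⟨ζ, hζ, rfl⟩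
  have hζ1 : ‖ζ‖ = 1 := by simpa using hζ
  have hζ0 : ζ ≠ 0 := norm_ne_zero_iff.1 (by rw [hζ1]; norm_num)
  rw [div_le_iff₀' (by positivity), dist_eq_norm, joukowski_sub_joukowski hz0 hζ0, norm_div,
    norm_mul, mul_assoc, mul_div_cancel₀ _ hr0.ne']
  exact one_sub_norm_mul_norm_one_sub_sq_le hz1 hζ1

lemma norm_joukowski_add_two_mul {z : ℂ} (hz : z ≠ 0) : ‖z‖ * ‖z + 1 / z + 2‖ = ‖1 + z‖ ^ 2 := by
  rw [← norm_mul, ← norm_pow]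
  congr 1
  field_simp
  ring

lemma norm_joukowski_sub_two_mul {z : ℂ} (hz : z ≠ 0) : ‖z‖ * ‖z + 1 / z - 2‖ = ‖1 - z‖ ^ 2 := by
  rw [← norm_mul, ← norm_pow]
  congr 1
  field_simp
  ring

lemma sqrt_norm_joukowski_sq_sub_four {z : ℂ} (hz : z ≠ 0) :
    √‖(z + 1 / z) ^ 2 - 4‖ = ‖1 - z ^ 2‖ / ‖z‖ := by
  have : (z + 1 / z) ^ 2 - 4 = ((1 - z ^ 2) / z) ^ 2 := by
    field_simp
    ring
  rw [this, norm_pow, norm_div, Real.sqrt_sq (by positivity)]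

/-- Lemma 3, remaining relations: under the Joukowski map `λ = z + 1/z` with
`δ ≤ |z| < 1`, one has `|1±z|² ≍ |λ±2|` and `1−|z| ≍ dist(λ,[−2,2])/|λ²−4|^{1/2}`,
with constants depending only on `δ`. -/
theorem joukowski_endpoint_comparisons (δ : ℝ) (hδ0 : 0 < δ) (hδ1 : δ < 1) :
    ∃ c C : ℝ, 0 < c ∧ 0 < C ∧ ∀ z : ℂ, δ ≤ ‖z‖ → ‖z‖ < 1 →
      (c * ‖z + 1 / z + 2‖ ≤ ‖1 + z‖ ^ 2 ∧
        ‖1 + z‖ ^ 2 ≤ C * ‖z + 1 / z + 2‖) ∧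
      (c * ‖z + 1 / z - 2‖ ≤ ‖1 - z‖ ^ 2 ∧
        ‖1 - z‖ ^ 2 ≤ C * ‖z + 1 / z - 2‖) ∧
      (c * (Metric.infDist (z + 1 / z) segTwo /
          Real.sqrt (‖(z + 1 / z) ^ 2 - 4‖)) ≤ 1 - ‖z‖ ∧
        1 - ‖z‖ ≤ C * (Metric.infDist (z + 1 / z) segTwo /
          Real.sqrt (‖(z + 1 / z) ^ 2 - 4‖))) := by
  refine ⟨δ / 2, 3, by positivity, by norm_num, fun z hδz hz1 => ?_⟩
  have hr0 : 0 < ‖z‖ := hδ0.trans_le hδz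
  have hz0 : z ≠ 0 := norm_pos_iff.1 hr0
  have comparable : ∀ N : ℝ, 0 ≤ N → δ / 2 * N ≤ ‖z‖ * N ∧ ‖z‖ * N ≤ 3 * N := fun N hN =>
    ⟨by gcongr; linarith, by gcongr; linarith⟩
  refine ⟨norm_joukowski_add_two_mul hz0 ▸ comparable _ (norm_nonneg _),
    norm_joukowski_sub_two_mul hz0 ▸ comparable _ (norm_nonneg _), ?_⟩
  have hgap : 0 < ‖1 - z ^ 2‖ := (sub_pos.2 hz1).trans_le (one_sub_norm_le_norm_one_sub_sq hz1.le)
  have hupper := norm_mul_infDist_joukowski_segTwo_le hz0 hz1.le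
  have hlower := one_sub_norm_mul_norm_one_sub_sq_le_infDist hz0 hz1.le
  rw [sqrt_norm_joukowski_sq_sub_four hz0, div_div_eq_mul_div, mul_comm (infDist _ _)]
  constructor
  · rw [← mul_div_assoc, div_le_iff₀ hgap]
    nlinarith
  · rw [← mul_div_assoc, le_div_iff₀ hgap]
    linarith
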